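/- Let α₀,α₁,α₂,α₃,α₄ be complex parameters with α₀ + α₁ + 2α₂ + α₃ + α₄ = 1, and let (y,z) be a solution of the Hamiltonian system (9) on an open set U ⊆ ℂ∖{0,1} with y(t) ≠ t for all t ∈ U. Then the pair (ỹ, z̃) := (y, z − α₀/(y−t)) is a solution of the Hamiltonian system (9) on U with parameters (−α₀, α₁, α₀+α₂, α₃, α₄). (Bäcklund transformation s₀.) -/

import Mathlib

/-- `(y, z)` is a (differentiable) solution of the Hamiltonian system (9) with
parameters `(a0, a1, a2, a3, a4)` on the set `U`. -/
def IsHamSol (a0 a1 a2 a3 a4 : ℂ) (U : Set ℂ) (y z : ℂ → ℂ) : Prop :=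
  ∀ t ∈ U, DifferentiableAt ℂ y t ∧ DifferentiableAt ℂ z t ∧
    t * (t - 1) * deriv y t =
      2 * y t * (y t - 1) * (y t - t) * z t - (a0 - 1) * y t * (y t - 1)
        - a3 * y t * (y t - t) - a4 * (y t - 1) * (y t - t) ∧
    t * (t - 1) * deriv z t =
      -(y t * (y t - 1) + (y t - 1) * (y t - t) + y t * (y t - t)) * z t ^ 2
        + ((2 * y t - 1) * (a0 - 1) + (2 * y t - t) * a3 + (2 * y t - t - 1) * a4) * z t
        - (a1 + a2) * a2

/-! The gauge `z ↦ z - α₀/(y - t)` leaves the `y`-equation unchanged while flipping `α₀`; in the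
`z`-equation the extra term `α₀ (y' - 1)/(y - t)²` coming from differentiating the gauge is
absorbed, via the `y`-equation and `α₀ + α₁ + 2α₂ + α₃ + α₄ = 1`, by the shift `α₂ ↦ α₀ + α₂`. -/

section HamField

variable (a0 a1 a2 a3 a4 t y z : ℂ)

def hamFieldY : ℂ :=
  2 * y * (y - 1) * (y - t) * z - (a0 - 1) * y * (y - 1) - a3 * y * (y - t)
    - a4 * (y - 1) * (y - t)

def hamFieldZ : ℂ :=
  -(y * (y - 1) + (y - 1) * (y - t) + y * (y - t)) * z ^ 2
    + ((2 * y - 1) * (a0 - 1) + (2 * y - t) * a3 + (2 * y - t - 1) * a4) * z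
    - (a1 + a2) * a2

theorem isHamSol_iff {U : Set ℂ} {y z : ℂ → ℂ} :
    IsHamSol a0 a1 a2 a3 a4 U y z ↔
      ∀ t ∈ U, DifferentiableAt ℂ y t ∧ DifferentiableAt ℂ z t ∧
        t * (t - 1) * deriv y t = hamFieldY a0 a3 a4 t (y t) (z t) ∧
        t * (t - 1) * deriv z t = hamFieldZ a0 a1 a2 a3 a4 t (y t) (z t) :=
  Iff.rfl

variable {a0 a1 a2 a3 a4 t y z}

theorem hamFieldY_s0 (hyt : y ≠ t) :
    hamFieldY (-a0) a3 a4 t y (z - a0 / (y - t)) = hamFieldY a0 a3 a4 t y z := by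
  have hw : y - t ≠ 0 := sub_ne_zero.mpr hyt
  unfold hamFieldY
  field_simp
  ring

theorem hamFieldZ_s0 (hsum : a0 + a1 + 2 * a2 + a3 + a4 = 1) (hyt : y ≠ t) :
    hamFieldZ (-a0) a1 (a0 + a2) a3 a4 t y (z - a0 / (y - t)) =
      hamFieldZ a0 a1 a2 a3 a4 t y z
        + a0 * (hamFieldY a0 a3 a4 t y z - t * (t - 1)) / (y - t) ^ 2 := by
  have hw : y - t ≠ 0 := sub_ne_zero.mpr hyt
  unfold hamFieldY hamFieldZ
  field_simp
  linear_combination -a0 * (y - t) ^ 2 * hsum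

end HamField

theorem HasDerivAt.sub_const_div_sub_id {𝕜 : Type*} [NontriviallyNormedField 𝕜]
    {y z : 𝕜 → 𝕜} {y' z' c t : 𝕜} (hy : HasDerivAt y y' t) (hz : HasDerivAt z z' t)
    (hyt : y t ≠ t) :
    HasDerivAt (fun s => z s - c / (y s - s)) (z' + c * (y' - 1) / (y t - t) ^ 2) t := by
  have hw : HasDerivAt (fun s => y s - s) (y' - 1) t := hy.sub (hasDerivAt_id t)
  exact (hz.sub ((hasDerivAt_const t c).div hw (sub_ne_zero.mpr hyt))).congr_deriv (by ring)

theorem ham_backlund_s0_general (a0 a1 a2 a3 a4 : ℂ)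
    (hsum : a0 + a1 + 2 * a2 + a3 + a4 = 1)
    (U : Set ℂ)
    (y z : ℂ → ℂ)
    (hyz : IsHamSol a0 a1 a2 a3 a4 U y z)
    (hyt : ∀ t ∈ U, y t ≠ t) :
    IsHamSol (-a0) a1 (a0 + a2) a3 a4 U
      y (fun t => z t - a0 / (y t - t)) := by
  rw [isHamSol_iff] at hyz ⊢
  intro t ht
  obtain ⟨hyd, hzd, hy, hz⟩ := hyz t ht
  have hz' := hyd.hasDerivAt.sub_const_div_sub_id (c := a0) hzd.hasDerivAt (hyt t ht)
  refine ⟨hyd, hz'.differentiableAt, ?_, ?_⟩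
  · rw [hamFieldY_s0 (hyt t ht), hy]
  · rw [hamFieldZ_s0 hsum (hyt t ht), hz'.deriv, ← hy, ← hz]
    ring

/-- **Bäcklund transformation s₀.** If `α₀ + α₁ + 2α₂ + α₃ + α₄ = 1` and `(y, z)` solves
the Hamiltonian system (9) on the open set `U ⊆ ℂ∖{0,1}` with `y t ≠ t` on `U`, then
`(y, z - α₀/(y - t))` solves system (9) on `U` with parameters
`(−α₀, α₁, α₀+α₂, α₃, α₄)`. -/
theorem ham_backlund_s0 (a0 a1 a2 a3 a4 : ℂ)
    (hsum : a0 + a1 + 2 * a2 + a3 + a4 = 1)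
    (U : Set ℂ) (hU : IsOpen U) (hU01 : ∀ t ∈ U, t ≠ 0 ∧ t ≠ 1)
    (y z : ℂ → ℂ)
    (hyz : IsHamSol a0 a1 a2 a3 a4 U y z)
    (hyt : ∀ t ∈ U, y t ≠ t) :
    IsHamSol (-a0) a1 (a0 + a2) a3 a4 U
      y (fun t => z t - a0 / (y t - t)) :=
  ham_backlund_s0_general a0 a1 a2 a3 a4 hsum U y z hyz hyt
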